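/- arXiv:0911.1164 — 3 statements merged into one kernel-verified Lean document; each statement's English description precedes it below -/
import Mathlib

section
/- If a Markov kernel P on a measurable space satisfies the drift condition P V ≤ λ V + b for a measurable function V : X → [1,∞), constants λ ∈ (0,1) and b ∈ (0,∞), and if π is an invariant probability measure for P, then π(V) ≤ b/(1-λ); in particular π(V) < ∞. -/
/-!
Iterating the drift inequality gives `∫ V d(Pⁿ x) ≤ λⁿ V x + b/(1-λ)`, whose limsup is `b/(1-λ)`
since `V x < ∞`. As `π` is `Pⁿ`-invariant, `π(V ∧ N) = π(Pⁿ(V ∧ N))` for all `n`; these integrands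
are bounded by `N`, so reverse Fatou bounds `π(V ∧ N)` by `b/(1-λ)`, and `N → ∞` gives the claim.
Truncating is what makes this work: `π(V) ≤ λ π(V) + b` alone is vacuous while `π(V)` might be `∞`.
-/

open MeasureTheory ProbabilityTheory ENNReal Filter Topology

namespace ProbabilityTheory.Kernel

variable {X : Type*} [MeasurableSpace X] {P : Kernel X X} {π : Measure X}

instance isMarkovKernel_pow [IsMarkovKernel P] (n : ℕ) : IsMarkovKernel (P ^ n) := by
  induction n with
  | zero => rw [pow_zero]; exact inferInstanceAs (IsMarkovKernel Kernel.id)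
  | succ n _ => rw [pow_succ]; exact IsMarkovKernel.comp _ _

theorem Invariant.pow (h : P.Invariant π) (n : ℕ) : (P ^ n).Invariant π := by
  induction n with
  | zero => exact Measure.id_comp
  | succ n ih => rw [pow_succ]; exact ih.comp h

theorem lintegral_pow_succ (P : Kernel X X) (n : ℕ) (x : X) {f : X → ℝ≥0∞} (hf : Measurable f) :
    ∫⁻ y, f y ∂(P ^ (n + 1)) x = ∫⁻ y, ∫⁻ z, f z ∂P y ∂(P ^ n) x := by
  rw [pow_succ']
  exact lintegral_comp P (P ^ n) x hf

theorem Invariant.lintegral_lintegral (h : P.Invariant π) {f : X → ℝ≥0∞} (hf : Measurable f) :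
    ∫⁻ x, ∫⁻ y, f y ∂P x ∂π = ∫⁻ x, f x ∂π := by
  rw [← Measure.lintegral_bind P.aemeasurable hf.aemeasurable, h.def]

theorem lintegral_pow_le_of_drift [IsMarkovKernel P] {V : X → ℝ≥0∞} (hV : Measurable V)
    {lam b : ℝ≥0∞} (hdrift : ∀ x, ∫⁻ y, V y ∂P x ≤ lam * V x + b) (n : ℕ) (x : X) :
    ∫⁻ y, V y ∂(P ^ n) x ≤ lam ^ n * V x + b * ∑ i ∈ Finset.range n, lam ^ i := by
  induction n generalizing x with
  | zero =>
    simp only [pow_zero, one_mul, Finset.range_zero, Finset.sum_empty, mul_zero, add_zero]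
    exact (lintegral_dirac' x hV).le
  | succ n ih =>
    calc ∫⁻ y, V y ∂(P ^ (n + 1)) x
        = ∫⁻ y, ∫⁻ z, V z ∂P y ∂(P ^ n) x := lintegral_pow_succ P n x hV
      _ ≤ ∫⁻ y, lam * V y + b ∂(P ^ n) x := lintegral_mono hdrift
      _ = lam * ∫⁻ y, V y ∂(P ^ n) x + b := by
        rw [lintegral_add_right _ measurable_const, lintegral_const_mul _ hV,
          MeasureTheory.lintegral_const, measure_univ, mul_one]
      _ ≤ lam * (lam ^ n * V x + b * ∑ i ∈ Finset.range n, lam ^ i) + b := by gcongr; exact ih x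
      _ = lam ^ (n + 1) * V x + b * ∑ i ∈ Finset.range (n + 1), lam ^ i := by
        rw [Finset.sum_range_succ', pow_zero]
        simp only [pow_succ', ← Finset.mul_sum]
        ring

theorem Invariant.lintegral_min_le_of_limsup_le [IsMarkovKernel P] [IsProbabilityMeasure π]
    (h : P.Invariant π) {f : X → ℝ≥0∞} (hf : Measurable f) {c : ℝ≥0∞}
    (hc : ∀ x, limsup (fun n ↦ ∫⁻ y, f y ∂(P ^ n) x) atTop ≤ c) (N : ℕ) :
    ∫⁻ x, f x ⊓ N ∂π ≤ c := by
  set g : ℕ → X → ℝ≥0∞ := fun n x ↦ ∫⁻ y, f y ⊓ N ∂(P ^ n) x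
  have hg_integral (n : ℕ) : ∫⁻ x, g n x ∂π = ∫⁻ x, f x ⊓ N ∂π :=
    (h.pow n).lintegral_lintegral (hf.min measurable_const)
  have hg_meas (n : ℕ) : Measurable (g n) := (hf.min measurable_const).lintegral_kernel
  have hg_le (n : ℕ) (x : X) : g n x ≤ N := by
    calc g n x ≤ ∫⁻ _, N ∂(P ^ n) x := lintegral_mono fun _ ↦ inf_le_right
      _ = N := by simp
  have hg_limsup (x : X) : limsup (fun n ↦ g n x) atTop ≤ c :=
    (limsup_le_limsup (Eventually.of_forall fun n ↦ lintegral_mono fun _ ↦ inf_le_left)).trans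
      (hc x)
  calc ∫⁻ x, f x ⊓ N ∂π = limsup (fun n ↦ ∫⁻ x, g n x ∂π) atTop := by
        simp only [hg_integral, limsup_const]
    _ ≤ ∫⁻ x, limsup (fun n ↦ g n x) atTop ∂π :=
        limsup_lintegral_le (fun _ ↦ N) hg_meas (fun n ↦ ae_of_all _ (hg_le n)) (by simp)
    _ ≤ ∫⁻ _, c ∂π := lintegral_mono hg_limsup
    _ = c := by simp

theorem Invariant.lintegral_le_of_limsup_le [IsMarkovKernel P] [IsProbabilityMeasure π]
    (h : P.Invariant π) {f : X → ℝ≥0∞} (hf : Measurable f) {c : ℝ≥0∞}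
    (hc : ∀ x, limsup (fun n ↦ ∫⁻ y, f y ∂(P ^ n) x) atTop ≤ c) :
    ∫⁻ x, f x ∂π ≤ c := by
  have hf_eq : f = fun x ↦ ⨆ N : ℕ, f x ⊓ N := by
    ext x
    rw [← inf_iSup_eq, ENNReal.iSup_natCast, inf_top_eq]
  rw [hf_eq, lintegral_iSup (fun N ↦ hf.min measurable_const)
    fun i j hij x ↦ inf_le_inf_left _ (Nat.cast_le.mpr hij)]
  exact iSup_le fun N ↦ h.lintegral_min_le_of_limsup_le hf hc N

end ProbabilityTheory.Kernel

theorem stmt0_general {X : Type*} [MeasurableSpace X]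
    (P : Kernel X X) [IsMarkovKernel P]
    (V : X → ℝ≥0∞) (hVmeas : Measurable V)
    (hVfin : ∀ x, V x ≠ ⊤)
    (lam b : ℝ≥0∞) (hlam1 : lam < 1)
    (hbfin : b ≠ ⊤)
    (hdrift : ∀ x, ∫⁻ y, V y ∂(P x) ≤ lam * V x + b)
    (π : Measure X) [IsProbabilityMeasure π]
    (hinv : π.bind (fun x => P x) = π) :
    ∫⁻ x, V x ∂π ≤ b / (1 - lam) ∧ ∫⁻ x, V x ∂π < ⊤ := by
  have hgeom (n : ℕ) : b * ∑ i ∈ Finset.range n, lam ^ i ≤ b / (1 - lam) := by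
    rw [div_eq_mul_inv, ← ENNReal.tsum_geometric]
    gcongr
    exact ENNReal.sum_le_tsum _
  have hlim (x : X) :
      Tendsto (fun n ↦ lam ^ n * V x + b / (1 - lam)) atTop (𝓝 (b / (1 - lam))) := by
    simpa using (ENNReal.Tendsto.mul_const (ENNReal.tendsto_pow_atTop_nhds_zero_of_lt_one hlam1)
      (Or.inr (hVfin x))).add_const (b / (1 - lam))
  have hle : ∫⁻ x, V x ∂π ≤ b / (1 - lam) :=
    Kernel.Invariant.lintegral_le_of_limsup_le hinv hVmeas fun x ↦
      calc limsup (fun n ↦ ∫⁻ y, V y ∂(P ^ n) x) atTop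
          ≤ limsup (fun n ↦ lam ^ n * V x + b / (1 - lam)) atTop :=
            limsup_le_limsup (Eventually.of_forall fun n ↦
              (Kernel.lintegral_pow_le_of_drift hVmeas hdrift n x).trans
                (add_le_add_right (hgeom n) _))
        _ = b / (1 - lam) := (hlim x).limsup_eq
  exact ⟨hle, hle.trans_lt (ENNReal.div_lt_top hbfin (tsub_pos_of_lt hlam1).ne')⟩

/-- If a Markov kernel `P` satisfies the drift condition `P V ≤ λ V + b` for a
measurable `V : X → [1,∞)`, `λ ∈ (0,1)`, `b ∈ (0,∞)`, and `π` is an invariant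
probability measure for `P`, then `π(V) ≤ b/(1-λ)`; in particular `π(V) < ∞`. -/
theorem stmt0 {X : Type*} [MeasurableSpace X]
    (P : Kernel X X) [IsMarkovKernel P]
    (V : X → ℝ≥0∞) (hVmeas : Measurable V)
    (hV1 : ∀ x, 1 ≤ V x) (hVfin : ∀ x, V x ≠ ⊤)
    (lam b : ℝ≥0∞) (hlam0 : 0 < lam) (hlam1 : lam < 1)
    (hb0 : 0 < b) (hbfin : b ≠ ⊤)
    (hdrift : ∀ x, ∫⁻ y, V y ∂(P x) ≤ lam * V x + b)
    (π : Measure X) [IsProbabilityMeasure π]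
    (hinv : π.bind (fun x => P x) = π) :
    ∫⁻ x, V x ∂π ≤ b / (1 - lam) ∧ ∫⁻ x, V x ∂π < ⊤ :=
  stmt0_general P V hVmeas hVfin lam b hlam1 hbfin hdrift π hinv
end

section
/- If assumption A2 holds (D_β(θ_{n−1}, θ_n) ≤ C γ_n V^η(X_n) a.s. with γ_n = O(n^{−α}), α > 1/2, η ∈ [0,1/2)) together with A1, then Σ_{k≥1} k^{−1/2} D_β(θ_k, θ_{k−1}) V^β(X_k) < ∞ almost surely for any β with β + η ≤ 1. -/
/-!
By A2 and `V ≥ 1`, the `k`-th term is at most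
`C k^{-1/2} γ_k V(X_k)^{η+β} ≤ C k^{-1/2} γ_k V(X_k)`, and `Σ k^{-1/2} γ_k < ∞` because
`α > 1/2`. The drift condition, applied through the chain's conditional law to the bounded
truncations `min V N`, gives `E[V(X_{n+1})] ≤ λ E[V(X_n)] + b`, hence `sup_n E[V(X_n)] < ∞`.
So the dominating series has finite expectation and is finite a.s.
-/

open MeasureTheory ProbabilityTheory Filter ENNReal

/-- The pseudo-metric `D_β(θ,θ') = sup_{|f|_{V^β} ≤ 1} sup_x
`|P_θ f(x) − P_{θ'} f(x)| / V(x)^β`, valued in `ℝ≥0∞`. -/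
noncomputable def Dbeta {𝒳 Θ : Type*} [MeasurableSpace 𝒳] (V : 𝒳 → ℝ) (β : ℝ)
    (P : Θ → ProbabilityTheory.Kernel 𝒳 𝒳) (t t' : Θ) : ℝ≥0∞ :=
  ⨆ (f : {f : 𝒳 → ℝ // Measurable f ∧ ∀ y, |f y| ≤ V y ^ β}) (x : 𝒳),
    ENNReal.ofReal (|∫ y, f.1 y ∂(P t x) - ∫ y, f.1 y ∂(P t' x)| / V x ^ β)

lemma Dbeta_comm {𝒳 Θ : Type*} [MeasurableSpace 𝒳] (V : 𝒳 → ℝ) (β : ℝ)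
    (P : Θ → Kernel 𝒳 𝒳) (t t' : Θ) :
    Dbeta V β P t t' = Dbeta V β P t' t := by
  unfold Dbeta
  exact iSup_congr fun f => iSup_congr fun x => by rw [abs_sub_comm]

lemma le_max_div_of_le_mul_add {u : ℕ → ℝ} {r b : ℝ} (hr0 : 0 ≤ r) (hr1 : r < 1)
    (h : ∀ n, u (n + 1) ≤ r * u n + b) (n : ℕ) : u n ≤ max (u 0) (b / (1 - r)) := by
  have hb : b ≤ (1 - r) * max (u 0) (b / (1 - r)) := by
    rw [← div_le_iff₀' (by linarith)]
    exact le_max_right _ _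
  induction n with
  | zero => exact le_max_left _ _
  | succ n ih => nlinarith [h n, mul_le_mul_of_nonneg_left ih hr0]

lemma summable_rpow_neg_mul_of_le_rpow_neg {γ : ℕ → ℝ} {p α K : ℝ} (hγ0 : ∀ n, 0 ≤ γ n)
    (hpα : 1 < p + α) (hγ : ∀ n : ℕ, 1 ≤ n → γ n ≤ K * (n : ℝ) ^ (-α)) :
    Summable fun k : ℕ => ((k : ℝ) + 1) ^ (-p) * γ (k + 1) := by
  have hsum : Summable fun k : ℕ => K * ((k : ℝ) + 1) ^ (-(p + α)) := by
    have := (summable_nat_add_iff 1).2 (Real.summable_nat_rpow.2 (by linarith : -(p + α) < -1))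
    exact (this.congr fun k => by push_cast; rfl).mul_left K
  refine Summable.of_nonneg_of_le (fun k => mul_nonneg (by positivity) (hγ0 _)) (fun k => ?_) hsum
  have hk : (0 : ℝ) < k + 1 := by positivity
  calc ((k : ℝ) + 1) ^ (-p) * γ (k + 1)
      ≤ ((k : ℝ) + 1) ^ (-p) * (K * ((k : ℝ) + 1) ^ (-α)) := by
        gcongr
        exact_mod_cast hγ (k + 1) (Nat.le_add_left 1 k)
    _ = K * ((k : ℝ) + 1) ^ (-(p + α)) := by
        rw [neg_add, Real.rpow_add hk]; ring

section Truncation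

variable {Ω : Type*} {m m0 : MeasurableSpace Ω} {μ : Measure Ω} [IsFiniteMeasure μ]

lemma integrable_and_integral_le_of_integral_min_le {Y : Ω → ℝ} (hY : Measurable Y)
    (hY0 : ∀ ω, 0 ≤ Y ω) {c : ℝ} (h : ∀ N : ℕ, ∫ ω, min (Y ω) N ∂μ ≤ c) :
    Integrable Y μ ∧ ∫ ω, Y ω ∂μ ≤ c := by
  have hmin_int : ∀ N : ℕ, Integrable (fun ω => min (Y ω) N) μ := fun N =>
    Integrable.of_bound (hY.min measurable_const).aestronglyMeasurable N
      (ae_of_all _ fun ω => by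
        rw [Real.norm_of_nonneg (le_min (hY0 ω) N.cast_nonneg)]; exact min_le_right _ _)
  have hsup : ∀ ω, ⨆ N : ℕ, ENNReal.ofReal (min (Y ω) N) = ENNReal.ofReal (Y ω) := fun ω =>
    le_antisymm (iSup_le fun N => ofReal_le_ofReal (min_le_left _ _))
      (le_iSup_of_le ⌈Y ω⌉₊ (by rw [min_eq_left (Nat.le_ceil _)]))
  have hlint : ∫⁻ ω, ENNReal.ofReal (Y ω) ∂μ ≤ ENNReal.ofReal c := by
    simp_rw [← hsup]
    rw [lintegral_iSup (fun N => (hY.min measurable_const).ennreal_ofReal)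
      (fun N N' hN ω => ofReal_le_ofReal (min_le_min le_rfl (Nat.cast_le.2 hN)))]
    refine iSup_le fun N => ?_
    rw [← ofReal_integral_eq_lintegral_ofReal (hmin_int N)
      (ae_of_all _ fun ω => le_min (hY0 ω) N.cast_nonneg)]
    exact ofReal_le_ofReal (h N)
  have hint : Integrable Y μ := ⟨hY.aestronglyMeasurable,
    (hasFiniteIntegral_iff_ofReal (ae_of_all _ hY0)).2 (hlint.trans_lt ofReal_lt_top)⟩
  have hc : 0 ≤ c := by simpa [hY0] using h 0
  refine ⟨hint, (ofReal_le_ofReal_iff hc).1 ?_⟩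
  rwa [ofReal_integral_eq_lintegral_ofReal hint (ae_of_all _ hY0)]

lemma integrable_and_integral_le_of_condExp_min_le (hm : m ≤ m0) {Y Z : Ω → ℝ}
    (hY : Measurable Y) (hY0 : ∀ ω, 0 ≤ Y ω) (hZ : Integrable Z μ)
    (h : ∀ N : ℕ, μ[fun ω => min (Y ω) N | m] ≤ᵐ[μ] Z) :
    Integrable Y μ ∧ ∫ ω, Y ω ∂μ ≤ ∫ ω, Z ω ∂μ :=
  integrable_and_integral_le_of_integral_min_le hY hY0 fun N =>
    (integral_condExp hm).symm.le.trans (integral_mono_ae integrable_condExp hZ (h N))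

end Truncation

section Drift

variable {𝒳 Θ Ω : Type*} [MeasurableSpace 𝒳] [m0 : MeasurableSpace Ω] {μ : Measure Ω}
  [IsProbabilityMeasure μ] {F : Filtration ℕ m0} {P : Θ → Kernel 𝒳 𝒳} {V : 𝒳 → ℝ}
  {lam b : ℝ} {X : ℕ → Ω → 𝒳} {θ : ℕ → Ω → Θ}

lemma integrable_and_integral_succ_le_of_drift (hVmeas : Measurable V) (hV0 : ∀ x, 0 ≤ V x)
    (hVint : ∀ t x, Integrable V (P t x)) (hdrift : ∀ t x, ∫ y, V y ∂(P t x) ≤ lam * V x + b)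
    (hX : ∀ n, Measurable (X n))
    (hchain : ∀ (n : ℕ) (f : 𝒳 → ℝ), Measurable f → (∃ K, ∀ x, |f x| ≤ K) →
      (μ[(fun ω => f (X (n+1) ω)) | F n]) =ᵐ[μ] fun ω => ∫ y, f y ∂(P (θ n ω) (X n ω)))
    {n : ℕ} (hn : Integrable (fun ω => V (X n ω)) μ) :
    Integrable (fun ω => V (X (n + 1) ω)) μ ∧
      ∫ ω, V (X (n + 1) ω) ∂μ ≤ lam * ∫ ω, V (X n ω) ∂μ + b := by
  have hZ : Integrable (fun ω => lam * V (X n ω) + b) μ :=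
    (hn.const_mul lam).add (integrable_const b)
  have hEZ : ∫ ω, (lam * V (X n ω) + b) ∂μ = lam * ∫ ω, V (X n ω) ∂μ + b := by
    rw [integral_add (hn.const_mul lam) (integrable_const b), integral_const_mul]
    simp
  rw [← hEZ]
  refine integrable_and_integral_le_of_condExp_min_le (F.le n) (hVmeas.comp (hX _))
    (fun ω => hV0 _) hZ fun N => ?_
  have htrunc_nonneg : ∀ x, 0 ≤ min (V x) N := fun x => le_min (hV0 x) N.cast_nonneg
  have htrunc_meas : Measurable fun x => min (V x) N := hVmeas.min measurable_const
  have htrunc_int : ∀ t x, Integrable (fun y => min (V y) N) (P t x) := fun t x =>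
    (hVint t x).mono' htrunc_meas.aestronglyMeasurable (ae_of_all _ fun y => by
      rw [Real.norm_of_nonneg (htrunc_nonneg y)]; exact min_le_left _ _)
  have htrunc_bdd : ∀ x, |min (V x) N| ≤ N := fun x => by
    rw [abs_of_nonneg (htrunc_nonneg x)]; exact min_le_right _ _
  filter_upwards [hchain n _ htrunc_meas ⟨N, htrunc_bdd⟩] with ω hω
  rw [hω]
  exact (integral_mono (htrunc_int _ _) (hVint _ _) fun y => min_le_left _ _).trans (hdrift _ _)

lemma integrable_and_integral_le_max_of_drift (hlam0 : 0 ≤ lam) (hlam1 : lam < 1)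
    (hVmeas : Measurable V) (hV0 : ∀ x, 0 ≤ V x)
    (hVint : ∀ t x, Integrable V (P t x)) (hdrift : ∀ t x, ∫ y, V y ∂(P t x) ≤ lam * V x + b)
    (hX : ∀ n, Measurable (X n)) (hX0 : Integrable (fun ω => V (X 0 ω)) μ)
    (hchain : ∀ (n : ℕ) (f : 𝒳 → ℝ), Measurable f → (∃ K, ∀ x, |f x| ≤ K) →
      (μ[(fun ω => f (X (n+1) ω)) | F n]) =ᵐ[μ] fun ω => ∫ y, f y ∂(P (θ n ω) (X n ω)))
    (n : ℕ) :
    Integrable (fun ω => V (X n ω)) μ ∧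
      ∫ ω, V (X n ω) ∂μ ≤ max (∫ ω, V (X 0 ω) ∂μ) (b / (1 - lam)) := by
  have hint : ∀ n, Integrable (fun ω => V (X n ω)) μ := fun n => by
    induction n with
    | zero => exact hX0
    | succ n ih =>
      exact (integrable_and_integral_succ_le_of_drift hVmeas hV0 hVint hdrift hX hchain ih).1
  refine ⟨hint n, le_max_div_of_le_mul_add (u := fun n => ∫ ω, V (X n ω) ∂μ) hlam0 hlam1
    (fun k => ?_) n⟩
  exact (integrable_and_integral_succ_le_of_drift hVmeas hV0 hVint hdrift hX hchain (hint k)).2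

end Drift

lemma ae_tsum_ofReal_mul_lt_top {Ω : Type*} [MeasurableSpace Ω] {μ : Measure Ω}
    {c : ℕ → ℝ} (hc0 : ∀ k, 0 ≤ c k) (hc : Summable c) {Y : ℕ → Ω → ℝ}
    (hY0 : ∀ k ω, 0 ≤ Y k ω) (hY : ∀ k, Integrable (Y k) μ) {B : ℝ}
    (hB : ∀ k, ∫ ω, Y k ω ∂μ ≤ B) :
    ∀ᵐ ω ∂μ, ∑' k, ENNReal.ofReal (c k * Y k ω) < ⊤ := by
  have hlint : ∀ k, ∫⁻ ω, ENNReal.ofReal (Y k ω) ∂μ ≤ ENNReal.ofReal B := fun k => by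
    rw [← ofReal_integral_eq_lintegral_ofReal (hY k) (ae_of_all _ (hY0 k))]
    exact ofReal_le_ofReal (hB k)
  have hmeas : ∀ k, AEMeasurable (fun ω => ENNReal.ofReal (c k * Y k ω)) μ := fun k =>
    ((hY k).aemeasurable.const_mul _).ennreal_ofReal
  refine ae_lt_top' (AEMeasurable.tsum hmeas) (LT.lt.ne ?_)
  calc ∫⁻ ω, ∑' k, ENNReal.ofReal (c k * Y k ω) ∂μ
      = ∑' k, ENNReal.ofReal (c k) * ∫⁻ ω, ENNReal.ofReal (Y k ω) ∂μ := by
        rw [lintegral_tsum hmeas]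
        congr 1 with k
        simp_rw [ENNReal.ofReal_mul (hc0 k)]
        exact lintegral_const_mul'' _ (hY k).aemeasurable.ennreal_ofReal
    _ ≤ ∑' k, ENNReal.ofReal (c k) * ENNReal.ofReal B := by gcongr with k; exact hlint k
    _ = ENNReal.ofReal (∑' k, c k) * ENNReal.ofReal B := by
        rw [ENNReal.tsum_mul_right, ofReal_tsum_of_nonneg hc0 hc]
    _ < ⊤ := mul_lt_top ofReal_lt_top ofReal_lt_top

lemma ofReal_mul_mul_ofReal_rpow_le {D : ℝ≥0∞} {a C g v η β : ℝ} (ha : 0 ≤ a)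
    (hCg : 0 ≤ C * g) (hv : 1 ≤ v) (hηβ : η + β ≤ 1) (hD : D ≤ ENNReal.ofReal (C * g * v ^ η)) :
    ENNReal.ofReal a * D * ENNReal.ofReal (v ^ β) ≤ ENNReal.ofReal (C * (a * g) * v) := by
  have hpow : v ^ η * v ^ β ≤ v := by
    rw [← Real.rpow_add (by linarith)]
    simpa using Real.rpow_le_rpow_of_exponent_le hv hηβ
  calc ENNReal.ofReal a * D * ENNReal.ofReal (v ^ β)
      ≤ ENNReal.ofReal a * ENNReal.ofReal (C * g * v ^ η) * ENNReal.ofReal (v ^ β) := by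
        gcongr
    _ = ENNReal.ofReal (a * (C * g) * (v ^ η * v ^ β)) := by
        rw [← ofReal_mul ha, ← ofReal_mul (by positivity)]; ring_nf
    _ ≤ ENNReal.ofReal (C * (a * g) * v) := by
        rw [show C * (a * g) * v = a * (C * g) * v by ring]
        exact ofReal_le_ofReal (by gcongr)

theorem stmt9_general {𝒳 Θ Ω : Type*} [MeasurableSpace 𝒳]
    [m0 : MeasurableSpace Ω]
    (μ : Measure Ω) [IsProbabilityMeasure μ]
    (F : Filtration ℕ m0)
    (P : Θ → Kernel 𝒳 𝒳)
    (V : 𝒳 → ℝ) (hVmeas : Measurable V) (hV1 : ∀ x, 1 ≤ V x)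
    -- A1: drift condition
    (lam b : ℝ) (hlam : lam ∈ Set.Ioo (0:ℝ) 1)
    (hVint : ∀ t x, Integrable V (P t x))
    (hdrift : ∀ t x, ∫ y, V y ∂(P t x) ≤ lam * V x + b)
    -- the adaptive Markov chain
    (Xc : ℕ → Ω → 𝒳) (θc : ℕ → Ω → Θ)
    (hXadp : ∀ n, Measurable[F n] (Xc n))
    (hX0 : Integrable (fun ω => V (Xc 0 ω)) μ)
    (hchain : ∀ (n : ℕ) (f : 𝒳 → ℝ), Measurable f → (∃ K, ∀ x, |f x| ≤ K) →
      (μ[(fun ω => f (Xc (n+1) ω)) | F n]) =ᵐ[μ]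
        fun ω => ∫ y, f y ∂(P (θc n ω) (Xc n ω)))
    -- A2: diminishing adaptation
    (η : ℝ) (hη0 : 0 ≤ η)
    (γ : ℕ → ℝ) (hγpos : ∀ n, 0 < γ n)
    (α : ℝ) (hα : 1/2 < α)
    (hγO : ∃ K : ℝ, ∀ n : ℕ, 1 ≤ n → γ n ≤ K * (n : ℝ) ^ (-α))
    (hA2 : ∀ β' : ℝ, 0 ≤ β' → β' ≤ 1 → ∃ C : ℝ, 0 < C ∧ ∀ n : ℕ, ∀ᵐ ω ∂μ,
      Dbeta V β' P (θc n ω) (θc (n+1) ω) ≤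
        ENNReal.ofReal (C * γ (n+1) * V (Xc (n+1) ω) ^ η))
    -- the exponent β
    (β : ℝ) (hβ0 : 0 ≤ β) (hβη : β + η ≤ 1) :
    ∀ᵐ ω ∂μ, ∑' k : ℕ,
      ENNReal.ofReal (((k : ℝ) + 1) ^ (-(1/2) : ℝ)) *
        Dbeta V β P (θc (k+1) ω) (θc k ω) *
          ENNReal.ofReal (V (Xc (k+1) ω) ^ β) < ⊤ := by
  obtain ⟨C, hC, hA2β⟩ := hA2 β hβ0 (by linarith)
  obtain ⟨K, hK⟩ := hγO
  have hV0 : ∀ x, 0 ≤ V x := fun x => zero_le_one.trans (hV1 x)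
  have hX : ∀ n, Measurable (Xc n) := fun n => (hXadp n).mono (F.le n) le_rfl
  have hweight0 : ∀ k : ℕ, 0 ≤ C * (((k : ℝ) + 1) ^ (-(1/2) : ℝ) * γ (k + 1)) := fun k =>
    mul_nonneg hC.le (mul_nonneg (by positivity) (hγpos _).le)
  have hweight : Summable fun k : ℕ => C * (((k : ℝ) + 1) ^ (-(1/2) : ℝ) * γ (k + 1)) :=
    (summable_rpow_neg_mul_of_le_rpow_neg (fun n => (hγpos n).le) (by linarith) hK).mul_left C
  have hEV := integrable_and_integral_le_max_of_drift hlam.1.le hlam.2 hVmeas hV0 hVint hdrift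
    hX hX0 hchain
  filter_upwards [ae_tsum_ofReal_mul_lt_top hweight0 hweight
    (fun (k : ℕ) ω => hV0 (Xc (k + 1) ω)) (fun k => (hEV (k + 1)).1) (fun k => (hEV (k + 1)).2),
    ae_all_iff.2 hA2β] with ω hfin hD
  refine lt_of_le_of_lt (ENNReal.tsum_le_tsum fun k => ?_) hfin
  rw [Dbeta_comm]
  exact ofReal_mul_mul_ofReal_rpow_le (Real.rpow_nonneg (by positivity) _)
    (mul_nonneg hC.le (hγpos _).le) (hV1 _) (by linarith) (hD k)

/-- Under A1 and A2 (diminishing adaptation `D_β(θ_{n−1},θ_n) ≤ C γ_n V^η(X_n)` a.s.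
with `γ_n = O(n^{−α})`, `α > 1/2`, `η ∈ [0,1/2)`), one has
`Σ_{k≥1} k^{−1/2} D_β(θ_k,θ_{k−1}) V^β(X_k) < ∞` a.s. for any `β` with `β + η ≤ 1`. -/
theorem stmt9 {𝒳 Θ Ω : Type*} [MeasurableSpace 𝒳] [MeasurableSpace.CountablyGenerated 𝒳]
    [MeasurableSpace Θ] [m0 : MeasurableSpace Ω]
    (μ : Measure Ω) [IsProbabilityMeasure μ]
    (F : Filtration ℕ m0)
    (P : Θ → Kernel 𝒳 𝒳) (hPmarkov : ∀ t, IsMarkovKernel (P t))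
    (π : Measure 𝒳) [IsProbabilityMeasure π]
    (hinv : ∀ t, π.bind (fun x => P t x) = π)
    (Piter : Θ → ℕ → Kernel 𝒳 𝒳)
    (hPiter0 : ∀ t x, Piter t 0 x = Measure.dirac x)
    (hPiterS : ∀ t (n : ℕ) x, Piter t (n+1) x = ((Piter t n) x).bind (fun y => P t y))
    (V : 𝒳 → ℝ) (hVmeas : Measurable V) (hV1 : ∀ x, 1 ≤ V x)
    -- A1: uniform-in-θ geometric ergodicity
    (hA1 : ∀ β' : ℝ, 0 < β' → β' ≤ 1 → ∃ C ρ : ℝ, 0 < C ∧ ρ ∈ Set.Ioo (0:ℝ) 1 ∧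
      ∀ (t : Θ) (n : ℕ) (x : 𝒳) (f : 𝒳 → ℝ), Measurable f → (∀ y, |f y| ≤ V y ^ β') →
        |∫ y, f y ∂(Piter t n x) - ∫ y, f y ∂π| ≤ C * ρ ^ n * V x ^ β')
    -- A1: drift condition
    (lam b : ℝ) (hlam : lam ∈ Set.Ioo (0:ℝ) 1) (hb : 0 < b)
    (hVint : ∀ t x, Integrable V (P t x))
    (hdrift : ∀ t x, ∫ y, V y ∂(P t x) ≤ lam * V x + b)
    -- the adaptive Markov chain
    (Xc : ℕ → Ω → 𝒳) (θc : ℕ → Ω → Θ)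
    (hXadp : ∀ n, Measurable[F n] (Xc n)) (hθadp : ∀ n, Measurable[F n] (θc n))
    (hX0 : Integrable (fun ω => V (Xc 0 ω)) μ)
    (hchain : ∀ (n : ℕ) (f : 𝒳 → ℝ), Measurable f → (∃ K, ∀ x, |f x| ≤ K) →
      (μ[(fun ω => f (Xc (n+1) ω)) | F n]) =ᵐ[μ]
        fun ω => ∫ y, f y ∂(P (θc n ω) (Xc n ω)))
    -- A2: diminishing adaptation
    (η : ℝ) (hη0 : 0 ≤ η) (hηhalf : η < 1/2)
    (γ : ℕ → ℝ) (hγpos : ∀ n, 0 < γ n) (hγmono : ∀ n, γ (n+1) ≤ γ n)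
    (α : ℝ) (hα : 1/2 < α)
    (hγO : ∃ K : ℝ, ∀ n : ℕ, 1 ≤ n → γ n ≤ K * (n : ℝ) ^ (-α))
    (hA2 : ∀ β' : ℝ, 0 ≤ β' → β' ≤ 1 → ∃ C : ℝ, 0 < C ∧ ∀ n : ℕ, ∀ᵐ ω ∂μ,
      Dbeta V β' P (θc n ω) (θc (n+1) ω) ≤
        ENNReal.ofReal (C * γ (n+1) * V (Xc (n+1) ω) ^ η))
    -- the exponent β
    (β : ℝ) (hβ0 : 0 ≤ β) (hβη : β + η ≤ 1) :
    ∀ᵐ ω ∂μ, ∑' k : ℕ,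
      ENNReal.ofReal (((k : ℝ) + 1) ^ (-(1/2) : ℝ)) *
        Dbeta V β P (θc (k+1) ω) (θc k ω) *
          ENNReal.ofReal (V (Xc (k+1) ω) ^ β) < ⊤ :=
  stmt9_general (m0 := m0) μ F P V hVmeas hV1 lam b hlam hVint hdrift Xc θc hXadp hX0 hchain η hη0 γ
    hγpos α hα hγO hA2 β hβ0 hβη
end

section
/- Let P be a Markov kernel with invariant probability π satisfying ‖Pⁿ(x,·) − π‖_{V^β} ≤ C ρⁿ V^β(x) with ρ ∈ (0,1), and let β ∈ (0, 1/2), h ∈ L_{V^β} with π(V) < ∞. Then the series σ²(h) := π(h̄²) + 2 Σ_{j≥1} π(h̄ Pʲ h̄) converges absolutely (where h̄ = h − π(h)), and in fact |π(h̄ Pʲ h̄)| ≤ C ρʲ |h|²_{V^β} π(V^{2β}). -/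
/-!
Write `h̄ = h - π(h)` and `gⱼ(x) = ∫ h̄ d(Pʲ x)`. The ergodicity bound, rescaled from
`|f| ≤ V^β` to `|h| ≤ M V^β`, gives `|gⱼ| ≤ M C ρʲ V^β`. Since `π` is `Pʲ`-invariant,
`π(gⱼ) = π(h̄) = 0`, so `π(h̄ gⱼ) = π(h gⱼ)`, which is at most
`M · M C ρʲ · π(V^{2β})` in absolute value; `π(V^{2β}) ≤ π(V)` is finite because `2β ≤ 1`.
Summability follows by comparison with a geometric series.
-/

open MeasureTheory ProbabilityTheory

namespace ProbabilityTheory.Kernel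

variable {X : Type*} [MeasurableSpace X] {P : Kernel X X} {Pn : ℕ → Kernel X X}

lemma isMarkovKernel_of_iterate [IsMarkovKernel P] (hPn0 : ∀ x, Pn 0 x = Measure.dirac x)
    (hPnS : ∀ (n : ℕ) (x : X), Pn (n+1) x = ((Pn n) x).bind (fun y => P y)) (n : ℕ) :
    IsMarkovKernel (Pn n) := by
  induction n with
  | zero => exact ⟨fun x => by rw [hPn0]; infer_instance⟩
  | succ n ih =>
    refine ⟨fun x => ⟨?_⟩⟩
    rw [hPnS, Measure.bind_apply MeasurableSet.univ P.aemeasurable]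
    simp

lemma invariant_of_iterate {π : Measure X} (hPn0 : ∀ x, Pn 0 x = Measure.dirac x)
    (hPnS : ∀ (n : ℕ) (x : X), Pn (n+1) x = ((Pn n) x).bind (fun y => P y))
    (hinv : P.Invariant π) (n : ℕ) : (Pn n).Invariant π := by
  induction n with
  | zero => simp only [Invariant, funext hPn0, Measure.bind_dirac]
  | succ n ih =>
    rw [Invariant, funext (hPnS n),
      ← Measure.bind_bind (Pn n).aemeasurable P.aemeasurable, ih.def, hinv.def]

lemma Invariant.integral_integral {E : Type*} [NormedAddCommGroup E] [NormedSpace ℝ E]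
    {κ : Kernel X X} {π : Measure X} (hκ : κ.Invariant π) {f : X → E} (hf : Integrable f π) :
    ∫ x, ∫ y, f y ∂κ x ∂π = ∫ x, f x ∂π := by
  have hcomp : (κ ∘ₖ Kernel.const Unit π) () = π :=
    Measure.comp_eq_comp_const_apply.symm.trans hκ.def
  have := Kernel.integral_comp (a := ()) (f := f) (hcomp ▸ hf)
  rwa [hcomp, Kernel.const_apply, eq_comm] at this

end ProbabilityTheory.Kernel

lemma abs_mul_le_mul_sq_of_abs_le_mul {u g w a b : ℝ} (hu : |u| ≤ a * w) (hg : |g| ≤ b * w) :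
    |u * g| ≤ a * b * w ^ 2 :=
  calc |u * g| = |u| * |g| := abs_mul _ _
    _ ≤ (a * w) * (b * w) := mul_le_mul hu hg (abs_nonneg _) ((abs_nonneg _).trans hu)
    _ = a * b * w ^ 2 := by ring

section IntegralBounds

variable {X : Type*} [MeasurableSpace X]

lemma abs_integral_sub_integral_le_mul {μ ν : Measure X} {W f : X → ℝ} {B M : ℝ}
    (hB : ∀ g : X → ℝ, Measurable g → (∀ y, |g y| ≤ W y) → |∫ y, g y ∂μ - ∫ y, g y ∂ν| ≤ B)
    (hf : Measurable f) (hM : 0 ≤ M) (hfW : ∀ y, |f y| ≤ M * W y) :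
    |∫ y, f y ∂μ - ∫ y, f y ∂ν| ≤ M * B := by
  rcases hM.eq_or_lt with rfl | hM
  · have hf0 : f = 0 := funext fun y => abs_nonpos_iff.mp (by simpa using hfW y)
    simp [hf0]
  · have hscaled := hB (fun y => M⁻¹ * f y) (measurable_const.mul hf) fun y => by
      rw [abs_mul, abs_of_pos (inv_pos.mpr hM), inv_mul_le_iff₀ hM]
      exact hfW y
    rw [integral_const_mul, integral_const_mul, ← mul_sub, abs_mul, abs_of_pos (inv_pos.mpr hM),
      inv_mul_le_iff₀ hM] at hscaled
    exact hscaled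

lemma abs_integral_sub_const_le {μ : Measure X} [IsProbabilityMeasure μ] {f : X → ℝ} {c B : ℝ}
    (hB : 0 ≤ B) (hf : Integrable f μ → |∫ y, f y ∂μ - c| ≤ B) :
    |∫ y, (f y - c) ∂μ| ≤ B := by
  by_cases hint : Integrable f μ
  · simpa [integral_sub hint (integrable_const c)] using hf hint
  · have : ¬ Integrable (fun y => f y - c) μ := fun h =>
      hint (integrable_add_const_iff.mp (by simpa only [sub_eq_add_neg] using h))
    simpa [integral_undef this] using hB

lemma integrable_rpow_of_le_one {μ : Measure X} {V : X → ℝ} (hV1 : ∀ x, 1 ≤ V x)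
    (hVmeas : Measurable V) (hμV : Integrable V μ) {p : ℝ} (hp : p ≤ 1) :
    Integrable (fun x => V x ^ p) μ := by
  refine hμV.mono' (hVmeas.pow_const p).aestronglyMeasurable (ae_of_all _ fun x => ?_)
  rw [Real.norm_eq_abs, abs_of_nonneg (Real.rpow_nonneg (by linarith [hV1 x]) p)]
  simpa using Real.rpow_le_rpow_of_exponent_le (hV1 x) hp

lemma abs_integral_mul_le_of_abs_le_mul {μ : Measure X} {u g W : X → ℝ} {a b : ℝ}
    (hW : Integrable (fun x => W x ^ 2) μ) (hu : ∀ x, |u x| ≤ a * W x)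
    (hg : ∀ x, |g x| ≤ b * W x) :
    |∫ x, u x * g x ∂μ| ≤ a * b * ∫ x, W x ^ 2 ∂μ := by
  rw [← integral_const_mul, ← Real.norm_eq_abs]
  exact norm_integral_le_of_norm_le (hW.const_mul _)
    (ae_of_all _ fun x => abs_mul_le_mul_sq_of_abs_le_mul (hu x) (hg x))

lemma abs_integral_sub_const_mul_le {μ : Measure X} {u g W : X → ℝ} {a b : ℝ} (c : ℝ)
    (hu_meas : AEStronglyMeasurable u μ) (hg_meas : AEStronglyMeasurable g μ)
    (hW : Integrable W μ) (hW2 : Integrable (fun x => W x ^ 2) μ)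
    (hu : ∀ x, |u x| ≤ a * W x) (hg : ∀ x, |g x| ≤ b * W x) (hg0 : ∫ x, g x ∂μ = 0) :
    |∫ x, (u x - c) * g x ∂μ| ≤ a * b * ∫ x, W x ^ 2 ∂μ := by
  have hg_int : Integrable g μ := (hW.const_mul b).mono' hg_meas (ae_of_all _ hg)
  have hug_int : Integrable (fun x => u x * g x) μ :=
    (hW2.const_mul (a * b)).mono' (hu_meas.mul hg_meas)
      (ae_of_all _ fun x => abs_mul_le_mul_sq_of_abs_le_mul (hu x) (hg x))
  have hcentered : ∫ x, (u x - c) * g x ∂μ = ∫ x, u x * g x ∂μ := by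
    simp_rw [sub_mul]
    rw [integral_sub hug_int (hg_int.const_mul c), integral_const_mul, hg0, mul_zero, sub_zero]
  rw [hcentered]
  exact abs_integral_mul_le_of_abs_le_mul hW2 hu hg

end IntegralBounds

theorem stmt18_general {X : Type*} [MeasurableSpace X]
    (P : Kernel X X) [IsMarkovKernel P]
    (Pn : ℕ → Kernel X X)
    (hPn0 : ∀ x, Pn 0 x = Measure.dirac x)
    (hPnS : ∀ (n : ℕ) (x : X), Pn (n+1) x = ((Pn n) x).bind (fun y => P y))
    (π : Measure X) [IsProbabilityMeasure π]
    (hinv : π.bind (fun x => P x) = π)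
    (V : X → ℝ) (hV1 : ∀ x, 1 ≤ V x) (hVmeas : Measurable V)
    (hπV : Integrable V π)
    (β : ℝ) (hβhalf : β < 1/2)
    (C ρ : ℝ) (hC : 0 < C) (hρ : ρ ∈ Set.Ioo (0:ℝ) 1)
    (herg : ∀ (n : ℕ) (x : X) (f : X → ℝ), Measurable f → (∀ y, |f y| ≤ V y ^ β) →
      |∫ y, f y ∂(Pn n x) - ∫ y, f y ∂π| ≤ C * ρ ^ n * V x ^ β)
    (h : X → ℝ) (hmeas : Measurable h)
    (M : ℝ) (hM : 0 ≤ M) (hbound : ∀ x, |h x| ≤ M * V x ^ β) :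
    (∀ j : ℕ, 1 ≤ j →
      |∫ x, ((h x - ∫ z, h z ∂π) * ∫ y, (h y - ∫ z, h z ∂π) ∂(Pn j x)) ∂π|
        ≤ C * ρ ^ j * M ^ 2 * ∫ x, V x ^ (2*β) ∂π) ∧
    Summable (fun j : ℕ =>
      |∫ x, ((h x - ∫ z, h z ∂π) * ∫ y, (h y - ∫ z, h z ∂π) ∂(Pn (j+1) x)) ∂π|) := by
  obtain ⟨hρ0, hρ1⟩ := hρ
  set c := ∫ z, h z ∂π
  have hVβ : Integrable (fun x => V x ^ β) π :=
    integrable_rpow_of_le_one hV1 hVmeas hπV (by linarith)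
  have hVβ_nonneg (x : X) : 0 ≤ V x ^ β := Real.rpow_nonneg (by linarith [hV1 x]) β
  have hVβ_sq (x : X) : (V x ^ β) ^ 2 = V x ^ (2 * β) := by
    rw [← Real.rpow_natCast, ← Real.rpow_mul (by linarith [hV1 x]), mul_comm]; norm_num
  have hV2β : Integrable (fun x => (V x ^ β) ^ 2) π := by
    simpa only [hVβ_sq] using integrable_rpow_of_le_one hV1 hVmeas hπV (p := 2 * β) (by linarith)
  have hh : Integrable h π :=
    (hVβ.const_mul M).mono' hmeas.aestronglyMeasurable (ae_of_all _ hbound)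
  have hcov (j : ℕ) : |∫ x, ((h x - c) * ∫ y, (h y - c) ∂(Pn j x)) ∂π|
      ≤ C * ρ ^ j * M ^ 2 * ∫ x, V x ^ (2*β) ∂π := by
    have := Kernel.isMarkovKernel_of_iterate hPn0 hPnS j
    have hg (x : X) : |∫ y, (h y - c) ∂(Pn j x)| ≤ M * C * ρ ^ j * V x ^ β :=
      (abs_integral_sub_const_le (by have := hVβ_nonneg x; positivity) fun _ =>
        abs_integral_sub_integral_le_mul (herg j x) hmeas hM hbound).trans_eq (by ring)
    have hg0 : ∫ x, ∫ y, (h y - c) ∂(Pn j x) ∂π = 0 := by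
      rw [(Kernel.invariant_of_iterate hPn0 hPnS hinv j).integral_integral
        (f := fun y => h y - c) (hh.sub (integrable_const c)), integral_sub hh (integrable_const c)]
      simp [c]
    calc _ ≤ M * (M * C * ρ ^ j) * ∫ x, (V x ^ β) ^ 2 ∂π :=
          abs_integral_sub_const_mul_le c hmeas.aestronglyMeasurable
            (hmeas.sub_const c).stronglyMeasurable.integral_kernel.aestronglyMeasurable
            hVβ hV2β hbound hg hg0
      _ = C * ρ ^ j * M ^ 2 * ∫ x, V x ^ (2*β) ∂π := by simp only [hVβ_sq]; ring
  refine ⟨fun j _ => hcov j, ?_⟩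
  refine Summable.of_nonneg_of_le (fun j => abs_nonneg _) (fun j => (hcov (j + 1)).trans_eq ?_)
    ((summable_geometric_of_lt_one hρ0.le hρ1).mul_left (C * ρ * M ^ 2 * ∫ x, V x ^ (2*β) ∂π))
  ring

/-- For a geometrically ergodic Markov kernel (in the `V^β` norm, `β ∈ (0,1/2)`)
with invariant probability `π`, `π(V) < ∞`, and `h ∈ L_{V^β}`, the series
`σ²(h) = π(h̄²) + 2 Σ_{j≥1} π(h̄ Pʲ h̄)` converges absolutely (`h̄ = h − π(h)`),
with `|π(h̄ Pʲ h̄)| ≤ C ρʲ |h|²_{V^β} π(V^{2β})`. -/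
theorem stmt18 {X : Type*} [MeasurableSpace X]
    (P : Kernel X X) [IsMarkovKernel P]
    (Pn : ℕ → Kernel X X)
    (hPn0 : ∀ x, Pn 0 x = Measure.dirac x)
    (hPnS : ∀ (n : ℕ) (x : X), Pn (n+1) x = ((Pn n) x).bind (fun y => P y))
    (π : Measure X) [IsProbabilityMeasure π]
    (hinv : π.bind (fun x => P x) = π)
    (V : X → ℝ) (hV1 : ∀ x, 1 ≤ V x) (hVmeas : Measurable V)
    (hπV : Integrable V π)
    (β : ℝ) (hβ0 : 0 < β) (hβhalf : β < 1/2)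
    (C ρ : ℝ) (hC : 0 < C) (hρ : ρ ∈ Set.Ioo (0:ℝ) 1)
    (herg : ∀ (n : ℕ) (x : X) (f : X → ℝ), Measurable f → (∀ y, |f y| ≤ V y ^ β) →
      |∫ y, f y ∂(Pn n x) - ∫ y, f y ∂π| ≤ C * ρ ^ n * V x ^ β)
    (h : X → ℝ) (hmeas : Measurable h)
    (M : ℝ) (hM : 0 ≤ M) (hbound : ∀ x, |h x| ≤ M * V x ^ β) :
    (∀ j : ℕ, 1 ≤ j →
      |∫ x, ((h x - ∫ z, h z ∂π) * ∫ y, (h y - ∫ z, h z ∂π) ∂(Pn j x)) ∂π|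
        ≤ C * ρ ^ j * M ^ 2 * ∫ x, V x ^ (2*β) ∂π) ∧
    Summable (fun j : ℕ =>
      |∫ x, ((h x - ∫ z, h z ∂π) * ∫ y, (h y - ∫ z, h z ∂π) ∂(Pn (j+1) x)) ∂π|) :=
  stmt18_general P Pn hPn0 hPnS π hinv V hV1 hVmeas hπV β hβhalf C ρ hC hρ herg h hmeas M hM hbound
end
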